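/- Let M ∈ 𝓜' and ε ∈ (0,1). Suppose D ⊆ ℕ has asymptotic density zero. Then there exist F ⊆ ℕ disjoint from D and of asymptotic density zero and a sequence of intervals (J_n)_{n∈F} such that M ⊆ ⋃_{n∈F} J_n and |J_n| ≤ ε^(n+1) for every n ∈ F. -/

import Mathlib

open MeasureTheory Filter

/-- `S ⊆ ℝ` is an interval. -/
def IsIntervalSet (S : Set ℝ) : Prop := S.OrdConnected

/-- A set `M ⊆ ℝ` is microscopic if for each `ε > 0` there is a sequence of intervals
`(J n)` covering `M` with `|J n| ≤ ε ^ (n + 1)` for each `n`. -/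
def Microscopic (M : Set ℝ) : Prop :=
  ∀ ε : ℝ, 0 < ε → ∃ J : ℕ → Set ℝ,
    (∀ n, IsIntervalSet (J n)) ∧ M ⊆ (⋃ n, J n) ∧
      ∀ n, volume (J n) ≤ ENNReal.ofReal (ε ^ (n + 1))

/-- `A ⊆ ℕ` has asymptotic density zero. -/
def DensityZero (A : Set ℕ) : Prop :=
  Tendsto (fun j : ℕ => ((A ∩ Set.Iic j).ncard : ℝ) / ((j : ℝ) + 1)) atTop (nhds 0)

/-- A set `M ⊆ ℝ` belongs to `𝓜'` if for every `ε > 0` there are `D ⊆ ℕ` of asymptotic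
density zero and intervals `(J d)_{d ∈ D}` covering `M` with `|J d| ≤ ε ^ (d + 1)`. -/
def MPrime (M : Set ℝ) : Prop :=
  ∀ ε : ℝ, 0 < ε → ∃ D : Set ℕ, DensityZero D ∧ ∃ J : ℕ → Set ℝ,
    (∀ d ∈ D, IsIntervalSet (J d)) ∧ M ⊆ (⋃ d ∈ D, J d) ∧
      ∀ d ∈ D, volume (J d) ≤ ENNReal.ofReal (ε ^ (d + 1))

lemma aux_ncard_count (A : Set ℕ) [DecidablePred (· ∈ A)] (j : ℕ) :
    (A ∩ Set.Iic j).ncard = Nat.count (· ∈ A) (j + 1) := by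
  rw [Nat.count_eq_card_filter_range, ← Set.ncard_coe_finset]
  congr 1
  ext k
  simp [Nat.lt_succ_iff, and_comm]

lemma aux_count_add (A : Set ℕ) [DecidablePred (· ∈ A)] (n : ℕ) :
    Nat.count (· ∉ A) n + Nat.count (· ∈ A) n = n := by
  induction n with
  | zero => simp
  | succ n ih =>
    rw [Nat.count_succ, Nat.count_succ]
    by_cases h : n ∈ A <;> simp [h] <;> omega

theorem mprime_avoiding_cover (M : Set ℝ) (hM : MPrime M) (ε : ℝ)
    (hε : ε ∈ Set.Ioo (0 : ℝ) 1) (D : Set ℕ) (hD : DensityZero D) :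
    ∃ F : Set ℕ, Disjoint D F ∧ DensityZero F ∧ ∃ J : ℕ → Set ℝ,
      (∀ n ∈ F, IsIntervalSet (J n)) ∧ M ⊆ (⋃ n ∈ F, J n) ∧
        ∀ n ∈ F, volume (J n) ≤ ENNReal.ofReal (ε ^ (n + 1)) := by
  classical
  obtain ⟨hε0, hε1⟩ := hε
  set p : ℕ → Prop := fun n => n ∉ D with hp
  -- eventually the density of D is below 1/2
  have hev : ∀ᶠ j : ℕ in atTop, ((D ∩ Set.Iic j).ncard : ℝ) / ((j : ℝ) + 1) < 1/2 :=
    hD.eventually (gt_mem_nhds (by norm_num))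
  obtain ⟨N, hN⟩ := eventually_atTop.mp hev
  -- count bound
  have hcount : ∀ j ≥ N, 2 * Nat.count (· ∈ D) (j + 1) ≤ j := by
    intro j hj
    have h1 := hN j hj
    rw [aux_ncard_count] at h1
    have hj1 : (0:ℝ) < (j : ℝ) + 1 := by positivity
    rw [div_lt_iff₀ hj1] at h1
    have : (2 * Nat.count (· ∈ D) (j + 1) : ℝ) < (j : ℝ) + 1 := by linarith
    exact_mod_cast Nat.lt_succ_iff.mp (by exact_mod_cast this)
  have hkey : ∀ d, N ≤ d → d < Nat.count p (3 * d + 3) := by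
    intro d hd
    have h1 := hcount (3 * d + 2) (by omega)
    rw [show 3 * d + 2 + 1 = 3 * d + 3 by omega] at h1
    have h2 := aux_count_add D (3 * d + 3)
    have h3 : Nat.count p (3 * d + 3) = Nat.count (· ∉ D) (3 * d + 3) := rfl
    omega
  have hinf : (setOf p).Infinite := by
    by_contra h
    rw [Set.not_infinite] at h
    set C := h.toFinset.card
    have h1 := hkey (max N C) (le_max_left _ _)
    have h2 : Nat.count p (3 * max N C + 3) ≤ C := Nat.count_le_card h (3 * max N C + 3)
    have := le_max_right N C
    omega
  have hmono := Nat.nth_strictMono (p := p) hinf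
  have hbound : ∀ d, Nat.nth p d + 1 ≤ (3 * N + 3) * (d + 1) := by
    intro d
    rcases le_or_gt N d with hd | hd
    · have h1 := Nat.nth_lt_of_lt_count (hkey d hd)
      nlinarith
    · have h1 := Nat.nth_lt_of_lt_count (hkey N le_rfl)
      have h2 : Nat.nth p d < Nat.nth p N := hmono hd
      nlinarith
  obtain ⟨D', hD', J', hJi, hJc, hJv⟩ := hM (ε ^ (3 * N + 3)) (pow_pos hε0 _)
  refine ⟨Nat.nth p '' D', ?_, ?_, ?_⟩
  · rw [Set.disjoint_right]
    rintro n ⟨d, _, rfl⟩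
    exact Nat.nth_mem_of_infinite hinf d
  · -- density zero of F
    have hle : ∀ j : ℕ, ((Nat.nth p '' D' ∩ Set.Iic j).ncard : ℝ) / ((j:ℝ) + 1)
        ≤ ((D' ∩ Set.Iic j).ncard : ℝ) / ((j:ℝ) + 1) := by
      intro j
      have hfin : (D' ∩ Set.Iic j).Finite := (Set.finite_Iic j).subset Set.inter_subset_right
      have hsub : Nat.nth p '' D' ∩ Set.Iic j ⊆ Nat.nth p '' (D' ∩ Set.Iic j) := by
        rintro n ⟨⟨d, hd, rfl⟩, hnj⟩
        exact ⟨d, ⟨hd, (hmono.le_apply).trans hnj⟩, rfl⟩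
      have hcard : (Nat.nth p '' D' ∩ Set.Iic j).ncard ≤ (D' ∩ Set.Iic j).ncard :=
        (Set.ncard_le_ncard hsub (hfin.image _)).trans (Set.ncard_image_le hfin)
      gcongr ?_ / _
      exact_mod_cast hcard
    exact squeeze_zero (fun j => by positivity) hle hD'
  · -- the intervals
    set Jn : ℕ → Set ℝ := fun n =>
      if h : ∃ d, d ∈ D' ∧ Nat.nth p d = n then J' h.choose else ∅ with hJn
    have hspec : ∀ n ∈ Nat.nth p '' D', ∃ d ∈ D', Nat.nth p d = n ∧ Jn n = J' d := by
      rintro n ⟨d, hd, rfl⟩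
      have h : ∃ d', d' ∈ D' ∧ Nat.nth p d' = Nat.nth p d := ⟨d, hd, rfl⟩
      exact ⟨h.choose, h.choose_spec.1, h.choose_spec.2, dif_pos h⟩
    refine ⟨Jn, fun n hn => ?_, fun x hx => ?_, fun n hn => ?_⟩
    · obtain ⟨d, hd, -, hEq⟩ := hspec n hn
      rw [hEq]; exact hJi d hd
    · obtain ⟨d, hd, hxd⟩ := Set.mem_iUnion₂.mp (hJc hx)
      refine Set.mem_iUnion₂.mpr ⟨Nat.nth p d, ⟨d, hd, rfl⟩, ?_⟩
      obtain ⟨d', hd', hEq', hJeq⟩ := hspec _ ⟨d, hd, rfl⟩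
      have : d' = d := Nat.nth_injective hinf hEq'
      rw [hJeq, this]
      exact hxd
    · obtain ⟨d, hd, hEq, hJeq⟩ := hspec n hn
      rw [hJeq]
      refine (hJv d hd).trans (ENNReal.ofReal_le_ofReal ?_)
      rw [← pow_mul]
      apply pow_le_pow_of_le_one hε0.le hε1.le
      rw [← hEq]
      exact hbound d
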